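/- arXiv:1509.09277 — 11 statements merged into one kernel-verified Lean document; each statement's English description precedes it below -/
import Mathlib

section
/- For positive reals x₁,…,xₙ, the function L(p) = (Σᵢ xᵢ^p)/(Σᵢ xᵢ^(p-1)) is strictly increasing in p unless all xᵢ are equal. -/
open Real Finset

lemma key_le (p q : ℝ) (hpq : p < q) (a b : ℝ) (ha : 0 < a) (hb : 0 < b) :
    a ^ p * b ^ (q-1) + b ^ p * a ^ (q-1) ≤ a ^ q * b ^ (p-1) + b ^ q * a ^ (p-1) := by
  have hq : ∀ c : ℝ, 0 < c → c ^ q = c ^ (p-1) * c ^ (q-p) * c := by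
    intro c hc
    rw [← Real.rpow_add hc, ← Real.rpow_add_one hc.ne']
    congr 1; ring
  have hq1 : ∀ c : ℝ, 0 < c → c ^ (q-1) = c ^ (p-1) * c ^ (q-p) := by
    intro c hc; rw [← Real.rpow_add hc]; congr 1; ring
  have hp : ∀ c : ℝ, 0 < c → c ^ p = c ^ (p-1) * c := by
    intro c hc
    nth_rewrite 1 [show p = (p-1)+1 by ring]
    rw [Real.rpow_add_one hc.ne']
  rw [hq a ha, hq b hb, hq1 a ha, hq1 b hb, hp a ha, hp b hb]
  have hsign : 0 ≤ (a - b) * (a ^ (q-p) - b ^ (q-p)) := by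
    rcases le_total a b with h | h
    · have h2 := Real.rpow_le_rpow ha.le h (by linarith : (0:ℝ) ≤ q - p)
      nlinarith
    · have h2 := Real.rpow_le_rpow hb.le h (by linarith : (0:ℝ) ≤ q - p)
      nlinarith
  have hA : 0 < a ^ (p-1) := Real.rpow_pos_of_pos ha _
  have hB : 0 < b ^ (p-1) := Real.rpow_pos_of_pos hb _
  nlinarith [mul_nonneg (mul_pos hA hB).le hsign]

lemma key_lt (p q : ℝ) (hpq : p < q) (a b : ℝ) (ha : 0 < a) (hb : 0 < b) (hab : a ≠ b) :
    a ^ p * b ^ (q-1) + b ^ p * a ^ (q-1) < a ^ q * b ^ (p-1) + b ^ q * a ^ (p-1) := by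
  have hq : ∀ c : ℝ, 0 < c → c ^ q = c ^ (p-1) * c ^ (q-p) * c := by
    intro c hc
    rw [← Real.rpow_add hc, ← Real.rpow_add_one hc.ne']
    congr 1; ring
  have hq1 : ∀ c : ℝ, 0 < c → c ^ (q-1) = c ^ (p-1) * c ^ (q-p) := by
    intro c hc; rw [← Real.rpow_add hc]; congr 1; ring
  have hp : ∀ c : ℝ, 0 < c → c ^ p = c ^ (p-1) * c := by
    intro c hc
    nth_rewrite 1 [show p = (p-1)+1 by ring]
    rw [Real.rpow_add_one hc.ne']
  rw [hq a ha, hq b hb, hq1 a ha, hq1 b hb, hp a ha, hp b hb]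
  have hsign : 0 < (a - b) * (a ^ (q-p) - b ^ (q-p)) := by
    rcases lt_or_gt_of_ne hab with h | h
    · have h2 := Real.rpow_lt_rpow ha.le h (by linarith : (0:ℝ) < q - p)
      nlinarith
    · have h2 := Real.rpow_lt_rpow hb.le h (by linarith : (0:ℝ) < q - p)
      nlinarith
  have hA : 0 < a ^ (p-1) := Real.rpow_pos_of_pos ha _
  have hB : 0 < b ^ (p-1) := Real.rpow_pos_of_pos hb _
  nlinarith [mul_pos (mul_pos hA hB) hsign]

theorem lehmer_strictMono (n : ℕ) (x : Fin n → ℝ) (hx : ∀ i, 0 < x i)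
    (hne : ¬ ∀ i j, x i = x j) :
    StrictMono (fun p : ℝ => (∑ i, x i ^ p) / (∑ i, x i ^ (p - 1))) := by
  push_neg at hne
  obtain ⟨i0, j0, hij⟩ := hne
  have : Nonempty (Fin n) := ⟨i0⟩
  have hden : ∀ r : ℝ, 0 < ∑ i, x i ^ r := fun r =>
    Finset.sum_pos (fun i _ => Real.rpow_pos_of_pos (hx i) r) univ_nonempty
  intro p q hpq
  simp only
  rw [div_lt_div_iff₀ (hden _) (hden _), Finset.sum_mul_sum, Finset.sum_mul_sum]
  have h2 : ∀ f : Fin n → Fin n → ℝ,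
      (∑ i, ∑ j, f i j) * 2 = ∑ i, ∑ j, (f i j + f j i) := by
    intro f
    simp only [Finset.sum_add_distrib]
    rw [Finset.sum_comm (f := fun i j => f j i)]
    ring
  have key : (∑ i, ∑ j, (x i ^ p * x j ^ (q-1) + x j ^ p * x i ^ (q-1)))
      < ∑ i, ∑ j, (x i ^ q * x j ^ (p-1) + x j ^ q * x i ^ (p-1)) := by
    apply Finset.sum_lt_sum
    · intro i _
      exact Finset.sum_le_sum fun j _ => key_le p q hpq _ _ (hx i) (hx j)
    · refine ⟨i0, Finset.mem_univ _, ?_⟩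
      apply Finset.sum_lt_sum
      · intro j _
        exact key_le p q hpq _ _ (hx i0) (hx j)
      · exact ⟨j0, Finset.mem_univ _, key_lt p q hpq _ _ (hx i0) (hx j0) hij⟩
  have e1 := h2 (fun i j => x i ^ p * x j ^ (q-1))
  have e2 := h2 (fun i j => x i ^ q * x j ^ (p-1))
  nlinarith [key]
end

section
/- For positive reals x₁,…,xₙ and any p ∈ ℝ, (Σᵢ xᵢ^p log xᵢ)/(Σᵢ xᵢ^p) ≥ (Σᵢ xᵢ^(p-1) log xᵢ)/(Σᵢ xᵢ^(p-1)), with equality if and only if all xᵢ are equal. -/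
open Real Finset

lemma log_diff_mul_diff_nonneg {a b : ℝ} (ha : 0 < a) (hb : 0 < b) :
    0 ≤ (Real.log a - Real.log b) * (a - b) := by
  rcases le_total a b with h | h
  · have : Real.log a ≤ Real.log b := Real.log_le_log ha h
    nlinarith [mul_nonneg (sub_nonneg.mpr this) (sub_nonneg.mpr h)]
  · have : Real.log b ≤ Real.log a := Real.log_le_log hb h
    exact mul_nonneg (by linarith) (by linarith)

lemma log_diff_mul_diff_eq_zero {a b : ℝ} (ha : 0 < a) (hb : 0 < b) :
    (Real.log a - Real.log b) * (a - b) = 0 ↔ a = b := by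
  constructor
  · intro h
    by_contra hne
    rcases lt_or_gt_of_ne hne with hlt | hgt
    · have hl : Real.log a < Real.log b := Real.log_lt_log ha hlt
      have : 0 < (Real.log a - Real.log b) * (a - b) :=
        mul_pos_of_neg_of_neg (by linarith) (by linarith)
      linarith
    · have hl : Real.log b < Real.log a := Real.log_lt_log hb hgt
      have : 0 < (Real.log a - Real.log b) * (a - b) :=
        mul_pos (by linarith) (by linarith)
      linarith
  · intro h; rw [h]; ring

theorem lehmer_log_mean_ineq (n : ℕ) (x : Fin n → ℝ) (hx : ∀ i, 0 < x i) (p : ℝ) :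
    (∑ i, x i ^ (p - 1) * Real.log (x i)) / (∑ i, x i ^ (p - 1)) ≤
      (∑ i, x i ^ p * Real.log (x i)) / (∑ i, x i ^ p) ∧
    ((∑ i, x i ^ p * Real.log (x i)) / (∑ i, x i ^ p) =
      (∑ i, x i ^ (p - 1) * Real.log (x i)) / (∑ i, x i ^ (p - 1)) ↔
      ∀ i j, x i = x j) := by
  rcases Nat.eq_zero_or_pos n with hn | hn
  · subst hn
    simp
  have hne : Nonempty (Fin n) := Fin.pos_iff_nonempty.mp hn
  have hcpos : ∀ i, (0:ℝ) < x i ^ (p - 1) := fun i => Real.rpow_pos_of_pos (hx i) _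
  have hxp : ∀ i, x i ^ p = x i ^ (p - 1) * x i := by
    intro i
    have := Real.rpow_add_one (hx i).ne' (p - 1)
    rw [sub_add_cancel] at this
    exact this
  have hA : (0:ℝ) < ∑ i, x i ^ p :=
    Finset.sum_pos (fun i _ => Real.rpow_pos_of_pos (hx i) p) Finset.univ_nonempty
  have hB : (0:ℝ) < ∑ i, x i ^ (p - 1) :=
    Finset.sum_pos (fun i _ => hcpos i) Finset.univ_nonempty
  have key : ∑ i, ∑ j, x i ^ (p - 1) * x j ^ (p - 1) *
        ((Real.log (x i) - Real.log (x j)) * (x i - x j)) =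
      2 * ((∑ i, x i ^ p * Real.log (x i)) * (∑ i, x i ^ (p - 1)) -
        (∑ i, x i ^ (p - 1) * Real.log (x i)) * (∑ i, x i ^ p)) := by
    have hF : ∑ i, ∑ j, (x i ^ (p - 1) * x i * Real.log (x i) * x j ^ (p - 1)
          - x i ^ (p - 1) * Real.log (x i) * (x j ^ (p - 1) * x j))
        = (∑ i, x i ^ p * Real.log (x i)) * (∑ i, x i ^ (p - 1)) -
          (∑ i, x i ^ (p - 1) * Real.log (x i)) * (∑ i, x i ^ p) := by
      simp_rw [hxp]
      rw [Finset.sum_mul_sum, Finset.sum_mul_sum, ← Finset.sum_sub_distrib]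
      refine Finset.sum_congr rfl fun i _ => ?_
      rw [← Finset.sum_sub_distrib]
    calc ∑ i, ∑ j, x i ^ (p - 1) * x j ^ (p - 1) *
            ((Real.log (x i) - Real.log (x j)) * (x i - x j))
        = ∑ i, ∑ j, ((x i ^ (p - 1) * x i * Real.log (x i) * x j ^ (p - 1)
              - x i ^ (p - 1) * Real.log (x i) * (x j ^ (p - 1) * x j))
            + (x j ^ (p - 1) * x j * Real.log (x j) * x i ^ (p - 1)
              - x j ^ (p - 1) * Real.log (x j) * (x i ^ (p - 1) * x i))) :=
          Finset.sum_congr rfl fun i _ => Finset.sum_congr rfl fun j _ => by ring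
      _ = (∑ i, ∑ j, (x i ^ (p - 1) * x i * Real.log (x i) * x j ^ (p - 1)
              - x i ^ (p - 1) * Real.log (x i) * (x j ^ (p - 1) * x j)))
          + ∑ i, ∑ j, (x j ^ (p - 1) * x j * Real.log (x j) * x i ^ (p - 1)
              - x j ^ (p - 1) * Real.log (x j) * (x i ^ (p - 1) * x i)) := by
          simp_rw [Finset.sum_add_distrib]
      _ = (∑ i, ∑ j, (x i ^ (p - 1) * x i * Real.log (x i) * x j ^ (p - 1)
              - x i ^ (p - 1) * Real.log (x i) * (x j ^ (p - 1) * x j)))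
          + ∑ i, ∑ j, (x i ^ (p - 1) * x i * Real.log (x i) * x j ^ (p - 1)
              - x i ^ (p - 1) * Real.log (x i) * (x j ^ (p - 1) * x j)) := by
          congr 1
          exact Finset.sum_comm
      _ = 2 * ((∑ i, x i ^ p * Real.log (x i)) * (∑ i, x i ^ (p - 1)) -
          (∑ i, x i ^ (p - 1) * Real.log (x i)) * (∑ i, x i ^ p)) := by rw [hF]; ring
  have hterm : ∀ i j : Fin n, 0 ≤ x i ^ (p - 1) * x j ^ (p - 1) *
      ((Real.log (x i) - Real.log (x j)) * (x i - x j)) := fun i j =>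
    mul_nonneg (mul_nonneg (hcpos i).le (hcpos j).le)
      (log_diff_mul_diff_nonneg (hx i) (hx j))
  have hsum_nonneg : 0 ≤ ∑ i, ∑ j, x i ^ (p - 1) * x j ^ (p - 1) *
      ((Real.log (x i) - Real.log (x j)) * (x i - x j)) :=
    Finset.sum_nonneg fun i _ => Finset.sum_nonneg fun j _ => hterm i j
  have hineq : (∑ i, x i ^ (p - 1) * Real.log (x i)) * (∑ i, x i ^ p) ≤
      (∑ i, x i ^ p * Real.log (x i)) * (∑ i, x i ^ (p - 1)) := by linarith [key ▸ hsum_nonneg]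
  constructor
  · rw [div_le_div_iff₀ hB hA]
    exact hineq
  · rw [div_eq_div_iff hA.ne' hB.ne']
    constructor
    · intro h
      have h0 : ∑ i, ∑ j, x i ^ (p - 1) * x j ^ (p - 1) *
          ((Real.log (x i) - Real.log (x j)) * (x i - x j)) = 0 := by
        rw [key, h]; ring
      intro i j
      have h1 := (Finset.sum_eq_zero_iff_of_nonneg
        (fun i _ => Finset.sum_nonneg fun j _ => hterm i j)).mp h0 i (Finset.mem_univ i)
      have h2 := (Finset.sum_eq_zero_iff_of_nonneg (fun j _ => hterm i j)).mp h1 j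
        (Finset.mem_univ j)
      have hcc : x i ^ (p - 1) * x j ^ (p - 1) ≠ 0 :=
        (mul_pos (hcpos i) (hcpos j)).ne'
      have : (Real.log (x i) - Real.log (x j)) * (x i - x j) = 0 := by
        rcases mul_eq_zero.mp h2 with h' | h'
        · exact absurd h' hcc
        · exact h'
      exact (log_diff_mul_diff_eq_zero (hx i) (hx j)).mp this
    · intro h
      have h0 : ∑ i, ∑ j, x i ^ (p - 1) * x j ^ (p - 1) *
          ((Real.log (x i) - Real.log (x j)) * (x i - x j)) = 0 :=
        Finset.sum_eq_zero fun i _ => Finset.sum_eq_zero fun j _ => by rw [h i j]; ring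
      linarith [key ▸ h0]
end

section
/- For positive reals x₁, x₂ and p ∈ ℝ, the second derivative of L(p) = (x₁^p + x₂^p)/(x₁^(p-1) + x₂^(p-1)) equals x₁·(a−1)·(log a)²·a^p·(a − a^p)/(a^p + a)³, where a = x₁/x₂. -/
open Real

/-!
Writing `a = x₁ / x₂`, homogeneity gives `L(q) = x₁ · (a^q + 1) / (a^q + a)`, and
`q ↦ a^q` has derivative `a^q · log a`; two applications of the quotient rule finish.
-/

noncomputable def normalizedLehmer (a q : ℝ) : ℝ := (a ^ q + 1) / (a ^ q + a)

lemma lehmer_eq_mul_normalizedLehmer {x₁ x₂ : ℝ} (hx₁ : 0 < x₁) (hx₂ : 0 < x₂) (q : ℝ) :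
    (x₁ ^ q + x₂ ^ q) / (x₁ ^ (q - 1) + x₂ ^ (q - 1)) = x₁ * normalizedLehmer (x₁ / x₂) q := by
  have hq₁ : 0 < x₁ ^ q := rpow_pos_of_pos hx₁ q
  have hq₂ : 0 < x₂ ^ q := rpow_pos_of_pos hx₂ q
  rw [normalizedLehmer, div_rpow hx₁.le hx₂.le, rpow_sub hx₁, rpow_sub hx₂, rpow_one, rpow_one]
  field_simp

section Derivatives

variable {a : ℝ} (ha : 0 < a)
include ha

lemma rpow_add_self_ne_zero (q : ℝ) : a ^ q + a ≠ 0 :=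
  (add_pos (rpow_pos_of_pos ha q) ha).ne'

lemma hasDerivAt_normalizedLehmer (q : ℝ) :
    HasDerivAt (normalizedLehmer a) ((a - 1) * log a * a ^ q / (a ^ q + a) ^ 2) q := by
  have hpow := (hasStrictDerivAt_const_rpow ha q).hasDerivAt
  have hne := rpow_add_self_ne_zero ha q
  refine ((hpow.add_const 1).div (hpow.add_const a) hne).congr_deriv ?_
  field_simp
  ring

lemma deriv_normalizedLehmer :
    deriv (normalizedLehmer a) = fun q => (a - 1) * log a * a ^ q / (a ^ q + a) ^ 2 :=
  funext fun q => (hasDerivAt_normalizedLehmer ha q).deriv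

lemma hasDerivAt_deriv_normalizedLehmer (q : ℝ) :
    HasDerivAt (deriv (normalizedLehmer a))
      ((a - 1) * log a ^ 2 * a ^ q * (a - a ^ q) / (a ^ q + a) ^ 3) q := by
  have hpow := (hasStrictDerivAt_const_rpow ha q).hasDerivAt
  have hne := rpow_add_self_ne_zero ha q
  rw [deriv_normalizedLehmer ha]
  refine ((hpow.const_mul ((a - 1) * log a)).div ((hpow.add_const a).pow 2)
    (pow_ne_zero 2 hne)).congr_deriv ?_
  simp only [Pi.pow_apply]
  field_simp
  ring

end Derivatives

theorem lehmer_second_deriv_two (x₁ x₂ : ℝ) (hx₁ : 0 < x₁) (hx₂ : 0 < x₂) (p : ℝ) :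
    iteratedDeriv 2
      (fun q : ℝ => (x₁ ^ q + x₂ ^ q) / (x₁ ^ (q - 1) + x₂ ^ (q - 1))) p =
      x₁ * (x₁ / x₂ - 1) * (Real.log (x₁ / x₂)) ^ 2 * (x₁ / x₂) ^ p *
        ((x₁ / x₂) - (x₁ / x₂) ^ p) / ((x₁ / x₂) ^ p + x₁ / x₂) ^ 3 := by
  have ha : 0 < x₁ / x₂ := div_pos hx₁ hx₂
  have hderiv : deriv (fun q => x₁ * normalizedLehmer (x₁ / x₂) q) =
      fun q => x₁ * deriv (normalizedLehmer (x₁ / x₂)) q :=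
    funext fun q => deriv_const_mul x₁ (hasDerivAt_normalizedLehmer ha q).differentiableAt
  simp_rw [lehmer_eq_mul_normalizedLehmer hx₁ hx₂]
  rw [iteratedDeriv_succ, iteratedDeriv_one, hderiv,
    ((hasDerivAt_deriv_normalizedLehmer ha p).const_mul x₁).deriv]
  ring
end

section
/- For distinct positive reals x₁ ≠ x₂, the two-variable Lehmer mean L(p) = (x₁^p + x₂^p)/(x₁^(p-1) + x₂^(p-1)) satisfies L''(p) > 0 for p < 1, L''(1) = 0, and L''(p) < 0 for p > 1; in particular p = 1 is the unique inflection point. -/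
/-!
Put `m = (log x₁ + log x₂) / 2` and `c = (log x₁ - log x₂) / 2`. Then
`x₁ ^ q + x₂ ^ q = 2 exp (m q) cosh (c q)`, and `cosh (u + c) / cosh u = cosh c + sinh c tanh u`
turns the Lehmer mean into an affine image of `tanh`:
`L q = exp m (cosh c + sinh c tanh (c (q - 1)))`.
Hence `L'' p = exp m c² sinh c tanh'' (c (p - 1))` with `tanh'' = -2 sinh / cosh ^ 3`, whose sign
is opposite to that of its argument; as `sinh c` has the sign of `c`, the sign of `L'' p` is that
of `1 - p`.
-/

open Real

theorem iteratedDeriv_comp_mul_sub {𝕜 : Type*} [NontriviallyNormedField 𝕜] {n : ℕ} {f : 𝕜 → 𝕜}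
    (hf : ContDiff 𝕜 n f) (c d x : 𝕜) :
    iteratedDeriv n (fun y => f (c * (y - d))) x = c ^ n * iteratedDeriv n f (c * (x - d)) := by
  rw [iteratedDeriv_comp_sub_const n (fun y => f (c * y)), iteratedDeriv_comp_const_mul hf]

namespace Real

theorem contDiff_tanh {n : WithTop ℕ∞} : ContDiff ℝ n tanh := by
  rw [show tanh = fun x => sinh x / cosh x from funext tanh_eq_sinh_div_cosh]
  exact contDiff_sinh.div contDiff_cosh fun x => (cosh_pos x).ne'

theorem hasDerivAt_tanh (x : ℝ) : HasDerivAt tanh (cosh x ^ 2)⁻¹ x := by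
  rw [show tanh = fun x => sinh x / cosh x from funext tanh_eq_sinh_div_cosh]
  refine ((hasDerivAt_sinh x).div (hasDerivAt_cosh x) (cosh_pos x).ne').congr_deriv ?_
  rw [inv_eq_one_div, ← cosh_sq_sub_sinh_sq x]
  ring

theorem iteratedDeriv_two_tanh (x : ℝ) : iteratedDeriv 2 tanh x = -2 * sinh x / cosh x ^ 3 := by
  have hderiv : deriv tanh = fun x => (cosh x ^ 2)⁻¹ := funext fun x => (hasDerivAt_tanh x).deriv
  rw [iteratedDeriv_succ, iteratedDeriv_one, hderiv,
    (((hasDerivAt_cosh x).fun_pow 2).fun_inv (pow_ne_zero 2 (cosh_pos x).ne')).deriv]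
  have := (cosh_pos x).ne'
  field_simp
  ring

theorem cosh_add_div_cosh (u c : ℝ) : cosh (u + c) / cosh u = cosh c + sinh c * tanh u := by
  rw [cosh_add, tanh_eq_sinh_div_cosh]
  have := (cosh_pos u).ne'
  field_simp

theorem exp_mul_add_exp_mul (a b q : ℝ) :
    exp (a * q) + exp (b * q) = 2 * exp ((a + b) / 2 * q) * cosh ((a - b) / 2 * q) := by
  have ha : (a + b) / 2 * q + (a - b) / 2 * q = a * q := by ring
  have hb : (a + b) / 2 * q + -((a - b) / 2 * q) = b * q := by ring
  rw [cosh_eq, ← ha, ← hb, exp_add, exp_add]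
  ring

theorem sinh_mul_sinh_mul_pos {c t : ℝ} (hc : c ≠ 0) (ht : 0 < t) :
    0 < sinh c * sinh (c * t) := by
  rcases hc.lt_or_gt with hc | hc
  · exact mul_pos_of_neg_of_neg (sinh_neg_iff.2 hc) (sinh_neg_iff.2 (mul_neg_of_neg_of_pos hc ht))
  · exact mul_pos (sinh_pos_iff.2 hc) (sinh_pos_iff.2 (mul_pos hc ht))

theorem sinh_mul_sinh_mul_neg {c t : ℝ} (hc : c ≠ 0) (ht : t < 0) :
    sinh c * sinh (c * t) < 0 := by
  have := sinh_mul_sinh_mul_pos hc (neg_pos.2 ht)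
  rwa [mul_neg, sinh_neg, mul_neg, neg_pos] at this

end Real

theorem exp_mul_add_exp_mul_div (a b q : ℝ) :
    (exp (a * q) + exp (b * q)) / (exp (a * (q - 1)) + exp (b * (q - 1))) =
      exp ((a + b) / 2) *
        (cosh ((a - b) / 2) + sinh ((a - b) / 2) * tanh ((a - b) / 2 * (q - 1))) := by
  rw [exp_mul_add_exp_mul, exp_mul_add_exp_mul]
  generalize (a + b) / 2 = m, (a - b) / 2 = c
  rw [← cosh_add_div_cosh,
    show c * (q - 1) + c = c * q by ring, show m * q = m + m * (q - 1) by ring, exp_add]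
  have := (cosh_pos (c * (q - 1))).ne'
  have := (exp_pos (m * (q - 1))).ne'
  field_simp

theorem iteratedDeriv_two_mul_cosh_add_sinh_mul_tanh (K c p : ℝ) :
    iteratedDeriv 2 (fun q => K * (cosh c + sinh c * tanh (c * (q - 1)))) p =
      -(2 * K * c ^ 2 * (sinh c * sinh (c * (p - 1))) / cosh (c * (p - 1)) ^ 3) := by
  rw [iteratedDeriv_const_mul_field, iteratedDeriv_const_add two_pos, iteratedDeriv_const_mul_field,
    iteratedDeriv_comp_mul_sub contDiff_tanh, iteratedDeriv_two_tanh]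
  ring

theorem lehmer_two_inflection (x₁ x₂ : ℝ) (hx₁ : 0 < x₁) (hx₂ : 0 < x₂)
    (hne : x₁ ≠ x₂) :
    (∀ p : ℝ, p < 1 → 0 < iteratedDeriv 2
        (fun q : ℝ => (x₁ ^ q + x₂ ^ q) / (x₁ ^ (q - 1) + x₂ ^ (q - 1))) p) ∧
    iteratedDeriv 2
        (fun q : ℝ => (x₁ ^ q + x₂ ^ q) / (x₁ ^ (q - 1) + x₂ ^ (q - 1))) 1 = 0 ∧
    (∀ p : ℝ, 1 < p → iteratedDeriv 2
        (fun q : ℝ => (x₁ ^ q + x₂ ^ q) / (x₁ ^ (q - 1) + x₂ ^ (q - 1))) p < 0) := by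
  set c := (log x₁ - log x₂) / 2
  have hc : c ≠ 0 :=
    div_ne_zero (sub_ne_zero.2 fun h => hne (log_injOn_pos hx₁ hx₂ h)) two_ne_zero
  have hL : (fun q : ℝ => (x₁ ^ q + x₂ ^ q) / (x₁ ^ (q - 1) + x₂ ^ (q - 1))) =
      fun q => exp ((log x₁ + log x₂) / 2) * (cosh c + sinh c * tanh (c * (q - 1))) := by
    funext q
    simp only [rpow_def_of_pos hx₁, rpow_def_of_pos hx₂, exp_mul_add_exp_mul_div, c]
  simp only [hL, iteratedDeriv_two_mul_cosh_add_sinh_mul_tanh]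
  refine ⟨fun p hp => neg_pos.2 ?_, by simp, fun p hp => neg_neg_of_pos ?_⟩
  · exact div_neg_of_neg_of_pos
      (mul_neg_of_pos_of_neg (by positivity) (sinh_mul_sinh_mul_neg hc (by linarith)))
      (pow_pos (cosh_pos _) 3)
  · exact div_pos (mul_pos (by positivity) (sinh_mul_sinh_mul_pos hc (by linarith)))
      (pow_pos (cosh_pos _) 3)
end

section
/- For positive weights ω₁, ω₂ and distinct positive reals x₁ ≠ x₂, the weighted Lehmer mean L(p) = (ω₁x₁^p + ω₂x₂^p)/(ω₁x₁^(p-1) + ω₂x₂^(p-1)) has its unique inflection point at p* = 1 − log(ω₁/ω₂)/log(x₁/x₂), i.e. L''(p*) = 0 and L'' changes sign there. -/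
/-!
With `A = ω₁ x₁^(p-1)` and `B = ω₂ x₂^(p-1)`, `L(p) = (A x₁ + B x₂) / (A + B)` is the convex
combination of `x₂` and `x₁` with weight `sigmoid (log (A / B))` on `x₁`, and `log (A / B)` is affine
in `p` with slope `k = log (x₁ / x₂)` and zero `p*`. So `L(p) = x₂ + (x₁ - x₂) σ(k (p - p*))`, and
since `σ'' = σ (1 - σ) (1 - 2σ)` has the sign opposite to its argument while `(x₁ - x₂) k > 0`,
`L''(p)` has the sign of `p* - p`.
-/

open Real

theorem iteratedDeriv_const_add_const_mul_comp_mul_sub {𝕜 : Type*} [NontriviallyNormedField 𝕜]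
    {n : ℕ} {f : 𝕜 → 𝕜} (hf : ContDiff 𝕜 n f) (hn : 0 < n) (c a k x₀ x : 𝕜) :
    iteratedDeriv n (fun x => c + a * f (k * (x - x₀))) x =
      a * k ^ n * iteratedDeriv n f (k * (x - x₀)) := by
  rw [iteratedDeriv_const_add hn, iteratedDeriv_const_mul_field,
    iteratedDeriv_comp_sub_const n (fun x => f (k * x)), iteratedDeriv_comp_const_mul hf, mul_assoc]

namespace Real

theorem iteratedDeriv_two_sigmoid (x : ℝ) :
    iteratedDeriv 2 sigmoid x = sigmoid x * (1 - sigmoid x) * (1 - 2 * sigmoid x) := by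
  rw [iteratedDeriv_succ, iteratedDeriv_one, deriv_sigmoid]
  exact ((hasDerivAt_sigmoid x).fun_mul ((hasDerivAt_sigmoid x).const_sub 1)).deriv.trans (by ring)

theorem iteratedDeriv_two_sigmoid_mul_self_neg {x : ℝ} (hx : x ≠ 0) :
    iteratedDeriv 2 sigmoid x * x < 0 := by
  have hσ : 0 < sigmoid x * (1 - sigmoid x) :=
    mul_pos (sigmoid_pos x) (sub_pos.2 (sigmoid_lt_one x))
  have hsign : (1 - 2 * sigmoid x) * x < 0 := by
    rcases hx.lt_or_gt with hx | hx
    · have : sigmoid x < 2⁻¹ := sigmoid_zero ▸ sigmoid_lt hx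
      exact mul_neg_of_pos_of_neg (by linarith) hx
    · have : 2⁻¹ < sigmoid x := sigmoid_zero ▸ sigmoid_lt hx
      exact mul_neg_of_neg_of_pos (by linarith) hx
  rw [iteratedDeriv_two_sigmoid, mul_assoc]
  exact mul_neg_of_pos_of_neg hσ hsign

theorem mul_add_mul_div_add_eq_add_mul_sigmoid_log {a b : ℝ} (ha : 0 < a) (hb : 0 < b) (x y : ℝ) :
    (a * x + b * y) / (a + b) = y + (x - y) * sigmoid (log (a / b)) := by
  rw [sigmoid_def, exp_neg, exp_log (div_pos ha hb)]
  field_simp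
  ring

theorem sub_mul_log_div_pos {x y : ℝ} (hx : 0 < x) (hy : 0 < y) (hne : x ≠ y) :
    0 < (x - y) * log (x / y) := by
  rw [log_div hx.ne' hy.ne']
  rcases hne.lt_or_gt with h | h
  · exact mul_pos_of_neg_of_neg (sub_neg.2 h) (sub_neg.2 (log_lt_log hx h))
  · exact mul_pos (sub_pos.2 h) (sub_pos.2 (log_lt_log hy h))

end Real

theorem weighted_lehmer_eq_add_mul_sigmoid {ω₁ ω₂ x₁ x₂ : ℝ} (hω₁ : 0 < ω₁) (hω₂ : 0 < ω₂)
    (hx₁ : 0 < x₁) (hx₂ : 0 < x₂) (q : ℝ) :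
    (ω₁ * x₁ ^ q + ω₂ * x₂ ^ q) / (ω₁ * x₁ ^ (q - 1) + ω₂ * x₂ ^ (q - 1)) =
      x₂ + (x₁ - x₂) * sigmoid (log (ω₁ / ω₂) + (q - 1) * log (x₁ / x₂)) := by
  have hpow {x : ℝ} (hx : 0 < x) : x ^ q = x ^ (q - 1) * x := by
    rw [← rpow_add_one hx.ne', sub_add_cancel]
  have hratio : ω₁ * x₁ ^ (q - 1) / (ω₂ * x₂ ^ (q - 1)) = ω₁ / ω₂ * (x₁ / x₂) ^ (q - 1) := by
    rw [div_rpow hx₁.le hx₂.le, mul_div_mul_comm]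
  have hlog : log (ω₁ * x₁ ^ (q - 1) / (ω₂ * x₂ ^ (q - 1))) =
      log (ω₁ / ω₂) + (q - 1) * log (x₁ / x₂) := by
    rw [hratio, log_mul (div_pos hω₁ hω₂).ne' (rpow_pos_of_pos (div_pos hx₁ hx₂) _).ne',
      log_rpow (div_pos hx₁ hx₂)]
  rw [← hlog, ← mul_add_mul_div_add_eq_add_mul_sigmoid_log (by positivity) (by positivity),
    hpow hx₁, hpow hx₂, mul_assoc, mul_assoc]

theorem weighted_lehmer_inflection (ω₁ ω₂ x₁ x₂ : ℝ)
    (hω₁ : 0 < ω₁) (hω₂ : 0 < ω₂) (hx₁ : 0 < x₁) (hx₂ : 0 < x₂) (hne : x₁ ≠ x₂) :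
    iteratedDeriv 2
      (fun q : ℝ => (ω₁ * x₁ ^ q + ω₂ * x₂ ^ q) /
        (ω₁ * x₁ ^ (q - 1) + ω₂ * x₂ ^ (q - 1)))
      (1 - Real.log (ω₁ / ω₂) / Real.log (x₁ / x₂)) = 0 ∧
    (∀ p : ℝ, p < 1 - Real.log (ω₁ / ω₂) / Real.log (x₁ / x₂) →
      0 < iteratedDeriv 2
        (fun q : ℝ => (ω₁ * x₁ ^ q + ω₂ * x₂ ^ q) /
          (ω₁ * x₁ ^ (q - 1) + ω₂ * x₂ ^ (q - 1))) p) ∧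
    (∀ p : ℝ, 1 - Real.log (ω₁ / ω₂) / Real.log (x₁ / x₂) < p →
      iteratedDeriv 2
        (fun q : ℝ => (ω₁ * x₁ ^ q + ω₂ * x₂ ^ q) /
          (ω₁ * x₁ ^ (q - 1) + ω₂ * x₂ ^ (q - 1))) p < 0) := by
  set k := log (x₁ / x₂)
  set p₀ := 1 - log (ω₁ / ω₂) / k
  have hk : 0 < (x₁ - x₂) * k := sub_mul_log_div_pos hx₁ hx₂ hne
  have hk₀ : k ≠ 0 := right_ne_zero_of_mul hk.ne'
  have hL : (fun q : ℝ => (ω₁ * x₁ ^ q + ω₂ * x₂ ^ q) /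
      (ω₁ * x₁ ^ (q - 1) + ω₂ * x₂ ^ (q - 1))) =
      fun q => x₂ + (x₁ - x₂) * sigmoid (k * (q - p₀)) := by
    ext q
    have harg : log (ω₁ / ω₂) + (q - 1) * k = k * (q - p₀) := by
      simp only [p₀]
      field_simp
      ring
    rw [weighted_lehmer_eq_add_mul_sigmoid hω₁ hω₂ hx₁ hx₂, harg]
  have hL'' (q : ℝ) : iteratedDeriv 2 (fun q => x₂ + (x₁ - x₂) * sigmoid (k * (q - p₀))) q =
      (x₁ - x₂) * k ^ 2 * iteratedDeriv 2 sigmoid (k * (q - p₀)) :=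
    iteratedDeriv_const_add_const_mul_comp_mul_sub (contDiff_sigmoid.of_le le_top) two_pos ..
  have hsign {q : ℝ} (hq : q ≠ p₀) :
      iteratedDeriv 2 (fun q => x₂ + (x₁ - x₂) * sigmoid (k * (q - p₀))) q * (q - p₀) < 0 := by
    calc _ = (x₁ - x₂) * k * (iteratedDeriv 2 sigmoid (k * (q - p₀)) * (k * (q - p₀))) := by
          rw [hL'']; ring
      _ < 0 := mul_neg_of_pos_of_neg hk
          (iteratedDeriv_two_sigmoid_mul_self_neg (mul_ne_zero hk₀ (sub_ne_zero.2 hq)))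
  rw [hL]
  refine ⟨?_, fun p hp => ?_, fun p hp => ?_⟩
  · rw [hL'', sub_self, mul_zero, iteratedDeriv_two_sigmoid, sigmoid_zero]
    norm_num
  · exact pos_of_mul_neg_left (hsign hp.ne) (sub_neg.2 hp).le
  · exact neg_of_mul_neg_left (hsign hp.ne') (sub_pos.2 hp).le
end

section
/- For positive weights ω₁, ω₂ and distinct positive reals x₁ ≠ x₂, if p* = 1 − log(ω₁/ω₂)/log(x₁/x₂), then the weighted Lehmer mean satisfies L(p*) = (x₁ + x₂)/2, the unweighted arithmetic mean. -/
open Real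

theorem weighted_lehmer_at_inflection (ω₁ ω₂ x₁ x₂ : ℝ)
    (hω₁ : 0 < ω₁) (hω₂ : 0 < ω₂) (hx₁ : 0 < x₁) (hx₂ : 0 < x₂) (hne : x₁ ≠ x₂) :
    (ω₁ * x₁ ^ (1 - Real.log (ω₁ / ω₂) / Real.log (x₁ / x₂)) +
        ω₂ * x₂ ^ (1 - Real.log (ω₁ / ω₂) / Real.log (x₁ / x₂))) /
      (ω₁ * x₁ ^ (1 - Real.log (ω₁ / ω₂) / Real.log (x₁ / x₂) - 1) +
        ω₂ * x₂ ^ (1 - Real.log (ω₁ / ω₂) / Real.log (x₁ / x₂) - 1)) =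
      (x₁ + x₂) / 2 := by
  set p : ℝ := 1 - Real.log (ω₁ / ω₂) / Real.log (x₁ / x₂) with hp
  have hd : x₁ / x₂ ≠ 1 := by
    intro h
    exact hne ((div_eq_one_iff_eq hx₂.ne').mp h)
  have hdpos : 0 < x₁ / x₂ := div_pos hx₁ hx₂
  have hl : Real.log (x₁ / x₂) ≠ 0 := by
    intro h
    rcases Real.log_eq_zero.mp h with h' | h' | h'
    · exact hdpos.ne' h'
    · exact hd h'
    · linarith
  have ht : (p - 1) * Real.log (x₁ / x₂) = Real.log (ω₂ / ω₁) := by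
    rw [hp]
    field_simp
    rw [Real.log_div hω₂.ne' hω₁.ne', Real.log_div hω₁.ne' hω₂.ne']
    ring
  have hratio : (x₁ / x₂) ^ (p - 1) = ω₂ / ω₁ := by
    rw [Real.rpow_def_of_pos hdpos, mul_comm, ht, Real.exp_log (div_pos hω₂ hω₁)]
  have key : ω₁ * x₁ ^ (p - 1) = ω₂ * x₂ ^ (p - 1) := by
    have h1 : x₁ ^ (p - 1) = (x₁ / x₂) ^ (p - 1) * x₂ ^ (p - 1) := by
      rw [Real.div_rpow hx₁.le hx₂.le]
      field_simp
    rw [h1, hratio]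
    field_simp
  have hc : 0 < ω₂ * x₂ ^ (p - 1) := mul_pos hω₂ (Real.rpow_pos_of_pos hx₂ _)
  have hx1p : x₁ ^ p = x₁ ^ (p - 1) * x₁ := by
    rw [← Real.rpow_add_one hx₁.ne' (p - 1)]; ring_nf
  have hx2p : x₂ ^ p = x₂ ^ (p - 1) * x₂ := by
    rw [← Real.rpow_add_one hx₂.ne' (p - 1)]; ring_nf
  rw [hx1p, hx2p]
  rw [show ω₁ * (x₁ ^ (p - 1) * x₁) = ω₁ * x₁ ^ (p - 1) * x₁ by ring, key]
  rw [show ω₂ * (x₂ ^ (p - 1) * x₂) = ω₂ * x₂ ^ (p - 1) * x₂ by ring]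
  field_simp
  ring
end

section
/- For pairwise distinct positive reals x₁, x₂, x₃, the function L̃(p) = ((x₂/x₃)^(p-1) − (x₁/x₃)^(p-1))(x₁−x₂)(log(x₁/x₂))² + ((x₃/x₂)^(p-1) − (x₁/x₂)^(p-1))(x₁−x₃)(log(x₁/x₃))² + ((x₃/x₁)^(p-1) − (x₂/x₁)^(p-1))(x₂−x₃)(log(x₂/x₃))² + K is strictly decreasing in p, where K = (x₁−x₂)log(x₁/x₂)log(x₁x₂/x₃²) + (x₁−x₃)log(x₁/x₃)log(x₁x₃/x₂²) + (x₂−x₃)log(x₂/x₃)log(x₂x₃/x₁²). -/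
/-!
In the coordinates `Lᵢ = log xᵢ`, with `c = p - 1`, the coefficients `(xᵢ / xⱼ) ^ (p - 1)` become
`exp ((Lᵢ - Lⱼ) c)`, so `∂ₚ L̃` is a combination of `g t = t exp (t c)` at the six differences
`Lᵢ - Lⱼ`, symmetric in the indices. For `L₃ < L₂ < L₁`, writing `x₁ - x₃ = (x₁ - x₂) + (x₂ - x₃)`
splits it as `(x₁ - x₂) A + (x₂ - x₃) B` where `A` and `B` involve only the `Lᵢ`. Each bracket has
a single positive term, at the middle one of three differences; as `t ↦ exp (t c)` is monotone, its
value there is at most the sum of those at the outer two, and the other terms of the bracket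
dominate.
-/

open Real

theorem exp_mul_le_add_of_le_of_le {s t r : ℝ} (c : ℝ) (hst : s ≤ t) (htr : t ≤ r) :
    exp (t * c) ≤ exp (s * c) + exp (r * c) := by
  rcases le_total 0 c with hc | hc
  · exact le_add_of_nonneg_of_le (exp_pos _).le (exp_le_exp.2 (mul_le_mul_of_nonneg_right htr hc))
  · exact le_add_of_le_of_nonneg (exp_le_exp.2 (mul_le_mul_of_nonpos_right hst hc)) (exp_pos _).le

theorem sq_mul_mul_lt_of_le_add {a b E₀ E₁ E₂ E₃ : ℝ} (ha : 0 < a) (hb : 0 < b)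
    (hE₁ : 0 ≤ E₁) (hE₂ : 0 ≤ E₂) (hE₃ : 0 < E₃) (hE₀ : E₀ ≤ E₁ + E₂) :
    a ^ 2 * b * E₀ < (a + b) ^ 2 * (b * E₁ + a * E₃) + a ^ 2 * (a + b) * E₂ := by
  linarith [mul_le_mul_of_nonneg_left hE₀ (by positivity : 0 ≤ a ^ 2 * b),
    mul_nonneg (by positivity : 0 ≤ (2 * a + b) * b ^ 2) hE₁,
    mul_nonneg (by positivity : 0 ≤ a ^ 3) hE₂,
    mul_pos (by positivity : 0 < (a + b) ^ 2 * a) hE₃]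

/-- With `f = exp`, `Lᵢ = log xᵢ` and `g t = exp (t (p - 1))` this is `L̃ p - K`; with
`g t = t exp (t (p - 1))` it is `∂ₚ L̃`. -/
noncomputable def lehmerSum (f g : ℝ → ℝ) (L₁ L₂ L₃ : ℝ) : ℝ :=
  (g (L₂ - L₃) - g (L₁ - L₃)) * (f L₁ - f L₂) * (L₁ - L₂) ^ 2 +
    (g (L₃ - L₂) - g (L₁ - L₂)) * (f L₁ - f L₃) * (L₁ - L₃) ^ 2 +
    (g (L₃ - L₁) - g (L₂ - L₁)) * (f L₂ - f L₃) * (L₂ - L₃) ^ 2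

section lehmerSum

variable {f g : ℝ → ℝ} {L₁ L₂ L₃ : ℝ}

theorem lehmerSum_swap₁₂ : lehmerSum f g L₂ L₁ L₃ = lehmerSum f g L₁ L₂ L₃ := by
  unfold lehmerSum; ring

theorem lehmerSum_swap₁₃ : lehmerSum f g L₃ L₂ L₁ = lehmerSum f g L₁ L₂ L₃ := by
  unfold lehmerSum; ring

theorem lehmerSum_swap₂₃ : lehmerSum f g L₁ L₃ L₂ = lehmerSum f g L₁ L₂ L₃ := by
  unfold lehmerSum; ring

theorem hasDerivAt_lehmerSum {G : ℝ → ℝ → ℝ} {g' : ℝ → ℝ} {p : ℝ}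
    (hG : ∀ t, HasDerivAt (fun q => G q t) (g' t) p) :
    HasDerivAt (fun q => lehmerSum f (G q) L₁ L₂ L₃) (lehmerSum f g' L₁ L₂ L₃) p := by
  unfold lehmerSum
  exact (((((hG _).sub (hG _)).mul_const _).mul_const _).add
    ((((hG _).sub (hG _)).mul_const _).mul_const _)).add
    ((((hG _).sub (hG _)).mul_const _).mul_const _)

theorem lehmerSum_neg_of_lt (hf : StrictMono f) (c : ℝ) (h₃₂ : L₃ < L₂) (h₂₁ : L₂ < L₁) :
    lehmerSum f (fun t => t * exp (t * c)) L₁ L₂ L₃ < 0 := by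
  have hA := sq_mul_mul_lt_of_le_add (E₀ := exp ((L₂ - L₃) * c)) (E₁ := exp ((L₃ - L₂) * c))
    (E₂ := exp ((L₁ - L₃) * c)) (E₃ := exp ((L₁ - L₂) * c)) (sub_pos.2 h₂₁) (sub_pos.2 h₃₂)
    (exp_pos _).le (exp_pos _).le (exp_pos _)
    (exp_mul_le_add_of_le_of_le c (by linarith) (by linarith))
  have hB := sq_mul_mul_lt_of_le_add (E₀ := exp ((L₂ - L₁) * c)) (E₁ := exp ((L₁ - L₂) * c))
    (E₂ := exp ((L₃ - L₁) * c)) (E₃ := exp ((L₃ - L₂) * c)) (sub_pos.2 h₃₂) (sub_pos.2 h₂₁)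
    (exp_pos _).le (exp_pos _).le (exp_pos _)
    ((exp_mul_le_add_of_le_of_le c (by linarith) (by linarith)).trans_eq (add_comm _ _))
  simp only [lehmerSum]
  linarith [mul_pos (sub_pos.2 (hf h₂₁)) (sub_pos.2 hA), mul_pos (sub_pos.2 (hf h₃₂)) (sub_pos.2 hB)]

theorem lehmerSum_neg (hf : StrictMono f) (c : ℝ)
    (h₁₂ : L₁ ≠ L₂) (h₁₃ : L₁ ≠ L₃) (h₂₃ : L₂ ≠ L₃) :
    lehmerSum f (fun t => t * exp (t * c)) L₁ L₂ L₃ < 0 := by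
  rcases h₁₂.lt_or_gt with h₁₂ | h₁₂ <;> rcases h₁₃.lt_or_gt with h₁₃ | h₁₃ <;>
    rcases h₂₃.lt_or_gt with h₂₃ | h₂₃
  · rw [← lehmerSum_swap₁₃]; exact lehmerSum_neg_of_lt hf c h₁₂ h₂₃
  · rw [← lehmerSum_swap₁₂, ← lehmerSum_swap₂₃]; exact lehmerSum_neg_of_lt hf c h₁₃ h₂₃
  · linarith
  · rw [← lehmerSum_swap₁₂]; exact lehmerSum_neg_of_lt hf c h₁₃ h₁₂
  · rw [← lehmerSum_swap₁₃, ← lehmerSum_swap₂₃]; exact lehmerSum_neg_of_lt hf c h₁₂ h₁₃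
  · linarith
  · rw [← lehmerSum_swap₂₃]; exact lehmerSum_neg_of_lt hf c h₂₃ h₁₃
  · exact lehmerSum_neg_of_lt hf c h₂₃ h₁₂

end lehmerSum

theorem lehmer_tilde_strictAnti (x₁ x₂ x₃ : ℝ)
    (hx₁ : 0 < x₁) (hx₂ : 0 < x₂) (hx₃ : 0 < x₃)
    (h12 : x₁ ≠ x₂) (h13 : x₁ ≠ x₃) (h23 : x₂ ≠ x₃) :
    StrictAnti (fun p : ℝ =>
      ((x₂ / x₃) ^ (p - 1) - (x₁ / x₃) ^ (p - 1)) * (x₁ - x₂) *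
          (Real.log (x₁ / x₂)) ^ 2 +
        ((x₃ / x₂) ^ (p - 1) - (x₁ / x₂) ^ (p - 1)) * (x₁ - x₃) *
          (Real.log (x₁ / x₃)) ^ 2 +
        ((x₃ / x₁) ^ (p - 1) - (x₂ / x₁) ^ (p - 1)) * (x₂ - x₃) *
          (Real.log (x₂ / x₃)) ^ 2 +
        ((x₁ - x₂) * Real.log (x₁ / x₂) * Real.log (x₁ * x₂ / (x₃ * x₃)) +
          (x₁ - x₃) * Real.log (x₁ / x₃) * Real.log (x₁ * x₃ / (x₂ * x₂)) +
          (x₂ - x₃) * Real.log (x₂ / x₃) * Real.log (x₂ * x₃ / (x₁ * x₁)))) := by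
  obtain ⟨L₁, rfl⟩ : ∃ L, x₁ = exp L := ⟨log x₁, (exp_log hx₁).symm⟩
  obtain ⟨L₂, rfl⟩ : ∃ L, x₂ = exp L := ⟨log x₂, (exp_log hx₂).symm⟩
  obtain ⟨L₃, rfl⟩ : ∃ L, x₃ = exp L := ⟨log x₃, (exp_log hx₃).symm⟩
  simp only [← exp_sub, log_exp, ← exp_mul]
  have hexp (p t : ℝ) : HasDerivAt (fun q => exp (t * (q - 1))) (t * exp (t * (p - 1))) p := by
    simpa [mul_comm] using (((hasDerivAt_id p).sub_const 1).const_mul t).exp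
  refine strictAnti_of_hasDerivAt_neg
    (f' := fun p => lehmerSum exp (fun t => t * exp (t * (p - 1))) L₁ L₂ L₃)
    (fun p => (hasDerivAt_lehmerSum (hexp p)).add_const _) fun p =>
    lehmerSum_neg exp_strictMono (p - 1) (exp_injective.ne_iff.1 h12)
      (exp_injective.ne_iff.1 h13) (exp_injective.ne_iff.1 h23)
end

section
/- For pairwise distinct positive reals x₁, x₂, x₃, the Lehmer mean L(p) = (x₁^p + x₂^p + x₃^p)/(x₁^(p-1) + x₂^(p-1) + x₃^(p-1)) has exactly one inflection point: there exists a unique p* ∈ ℝ with L''(p*) = 0, and L''(p) > 0 for p < p* and L''(p) < 0 for p > p*. -/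
/-!
Write `tᵢ = log xᵢ` and `q = p - 1`. Then `L(p)` is the average of the `xᵢ` against the weights
`e^{tᵢ q}`, and the quotient rule shows that `L''(p)` has the sign of a cubic form in these
weights. Divided by `e^{(t₁+t₂+t₃) q}` it becomes a constant plus a combination of the
exponentials `e^{(tᵢ - tₖ) q}`; for `x₁ < x₂ < x₃` the terms of its derivative with the wrong sign
are dominated pairwise by the others, which leaves a slope at most `-δ < 0`. A function of slope
at most `-δ` changes sign exactly once, from `+` to `-`.
-/

open Real Filter

def ChangesSignDownAt (f : ℝ → ℝ) (a : ℝ) : Prop :=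
  (∀ x, f x = 0 ↔ x = a) ∧ (∀ x < a, 0 < f x) ∧ ∀ x, a < x → f x < 0

namespace ChangesSignDownAt

variable {f g : ℝ → ℝ} {a : ℝ}

lemma of_strictAnti (hf : StrictAnti f) (ha : f a = 0) : ChangesSignDownAt f a :=
  ⟨fun _ => ⟨fun hx => hf.injective (hx.trans ha.symm), fun hx => hx ▸ ha⟩,
    fun _ hx => ha ▸ hf hx, fun _ hx => ha ▸ hf hx⟩

lemma mul_pos_left (h : ChangesSignDownAt f a) (hg : ∀ x, 0 < g x) :
    ChangesSignDownAt (fun x => g x * f x) a := by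
  obtain ⟨hzero, hpos, hneg⟩ := h
  refine ⟨fun x => ?_, fun x hx => mul_pos (hg x) (hpos x hx),
    fun x hx => mul_neg_of_pos_of_neg (hg x) (hneg x hx)⟩
  rw [mul_eq_zero, or_iff_right (hg x).ne', hzero]

lemma comp_sub_const (h : ChangesSignDownAt f a) (c : ℝ) :
    ChangesSignDownAt (fun x => f (x - c)) (a + c) := by
  obtain ⟨hzero, hpos, hneg⟩ := h
  exact ⟨fun x => (hzero _).trans sub_eq_iff_eq_add, fun x hx => hpos _ (by linarith),
    fun x hx => hneg _ (by linarith)⟩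

end ChangesSignDownAt

lemma exists_changesSignDownAt_of_deriv_le_neg {f : ℝ → ℝ} {δ : ℝ} (hf : Differentiable ℝ f)
    (hδ : 0 < δ) (hf' : ∀ x, deriv f x ≤ -δ) : ∃ a, ChangesSignDownAt f a := by
  have hslope : ∀ ⦃x y⦄, x ≤ y → f y - f x ≤ -δ * (y - x) :=
    image_sub_le_mul_sub_of_deriv_le hf hf'
  have hneg : -δ < 0 := neg_lt_zero.2 hδ
  have hbot : Tendsto f atBot atTop := by
    refine tendsto_atTop_mono' _ ?_
      (tendsto_atTop_add_const_left _ (f 0) (tendsto_id.const_mul_atBot_of_neg hneg))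
    filter_upwards [eventually_le_atBot 0] with x hx
    rw [id]
    linarith [hslope hx]
  have htop : Tendsto f atTop atBot := by
    refine tendsto_atBot_mono' _ ?_
      (tendsto_atBot_add_const_left _ (f 0) (tendsto_id.const_mul_atTop_of_neg hneg))
    filter_upwards [eventually_ge_atTop 0] with x hx
    rw [id]
    linarith [hslope hx]
  obtain ⟨a, ha⟩ := hf.continuous.surjective' hbot htop 0
  exact ⟨a, .of_strictAnti (strictAnti_of_deriv_neg fun x => (hf' x).trans_lt hneg) ha⟩

lemma iteratedDeriv_two_div {𝕜 : Type*} [NontriviallyNormedField 𝕜]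
    {u u' u'' v v' v'' : 𝕜 → 𝕜}
    (hu : ∀ x, HasDerivAt u (u' x) x) (hu' : ∀ x, HasDerivAt u' (u'' x) x)
    (hv : ∀ x, HasDerivAt v (v' x) x) (hv' : ∀ x, HasDerivAt v' (v'' x) x)
    (hv₀ : ∀ x, v x ≠ 0) (x : 𝕜) :
    iteratedDeriv 2 (fun x => u x / v x) x =
      ((u'' x * v x - u x * v'' x) * v x - 2 * v' x * (u' x * v x - u x * v' x)) / v x ^ 3 := by
  have hderiv : deriv (fun x => u x / v x) = fun x => (u' x * v x - u x * v' x) / v x ^ 2 :=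
    funext fun x => ((hu x).div (hv x) (hv₀ x)).deriv
  have hderiv₂ := (((hu' x).fun_mul (hv x)).fun_sub ((hu x).fun_mul (hv' x))).fun_div
    ((hv x).fun_pow 2) (pow_ne_zero 2 (hv₀ x))
  rw [iteratedDeriv_succ, iteratedDeriv_one, hderiv, hderiv₂.deriv]
  have := hv₀ x
  field_simp
  ring

lemma hasDerivAt_exp_const_mul (t q : ℝ) :
    HasDerivAt (fun q => exp (t * q)) (t * exp (t * q)) q := by
  simpa [mul_comm] using ((hasDerivAt_id q).const_mul t).exp

noncomputable def expMoment (c₁ c₂ c₃ t₁ t₂ t₃ : ℝ) (k : ℕ) (q : ℝ) : ℝ :=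
  c₁ * t₁ ^ k * exp (t₁ * q) + c₂ * t₂ ^ k * exp (t₂ * q) + c₃ * t₃ ^ k * exp (t₃ * q)

section
variable (c₁ c₂ c₃ t₁ t₂ t₃ : ℝ)

lemma hasDerivAt_expMoment (k : ℕ) (q : ℝ) :
    HasDerivAt (expMoment c₁ c₂ c₃ t₁ t₂ t₃ k) (expMoment c₁ c₂ c₃ t₁ t₂ t₃ (k + 1) q) q := by
  refine ((((hasDerivAt_exp_const_mul t₁ q).const_mul (c₁ * t₁ ^ k)).fun_add
    ((hasDerivAt_exp_const_mul t₂ q).const_mul (c₂ * t₂ ^ k))).fun_add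
    ((hasDerivAt_exp_const_mul t₃ q).const_mul (c₃ * t₃ ^ k))).congr_deriv ?_
  simp only [expMoment]
  ring

lemma expMoment_one_zero_pos (q : ℝ) : 0 < expMoment 1 1 1 t₁ t₂ t₃ 0 q := by
  simp only [expMoment, pow_zero, one_mul]
  positivity

end

noncomputable def expMean (x₁ x₂ x₃ t₁ t₂ t₃ q : ℝ) : ℝ :=
  expMoment x₁ x₂ x₃ t₁ t₂ t₃ 0 q / expMoment 1 1 1 t₁ t₂ t₃ 0 q

/-- With `aᵢ = e^{tᵢ q}`, the quotient rule writes the second derivative of `expMean` as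
`W / (a₁ + a₂ + a₃)³` for the cubic form `W = C a₁a₂a₃ + ∑_{i ≠ j} (xⱼ - xᵢ)(tⱼ - tᵢ)² aᵢ² aⱼ`,
`C` being the constant term below; this is `W / (a₁a₂a₃)`. -/
noncomputable def reducedSecondDeriv (x₁ x₂ x₃ t₁ t₂ t₃ q : ℝ) : ℝ :=
  (x₂ - x₁) * (t₂ - t₁) * (t₁ + t₂ - 2 * t₃) + (x₃ - x₁) * (t₃ - t₁) * (t₁ + t₃ - 2 * t₂) +
    (x₃ - x₂) * (t₃ - t₂) * (t₂ + t₃ - 2 * t₁) +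
  ((x₂ - x₁) * (t₂ - t₁) ^ 2 * (exp ((t₁ - t₃) * q) - exp ((t₂ - t₃) * q)) +
    (x₃ - x₁) * (t₃ - t₁) ^ 2 * (exp ((t₁ - t₂) * q) - exp ((t₃ - t₂) * q)) +
    (x₃ - x₂) * (t₃ - t₂) ^ 2 * (exp ((t₂ - t₁) * q) - exp ((t₃ - t₁) * q)))

lemma iteratedDeriv_two_expMean (x₁ x₂ x₃ t₁ t₂ t₃ q : ℝ) :
    iteratedDeriv 2 (expMean x₁ x₂ x₃ t₁ t₂ t₃) q =
      exp ((t₁ + t₂ + t₃) * q) / expMoment 1 1 1 t₁ t₂ t₃ 0 q ^ 3 *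
        reducedSecondDeriv x₁ x₂ x₃ t₁ t₂ t₃ q := by
  unfold expMean
  rw [iteratedDeriv_two_div (hasDerivAt_expMoment _ _ _ _ _ _ _)
    (hasDerivAt_expMoment _ _ _ _ _ _ _) (hasDerivAt_expMoment _ _ _ _ _ _ _)
    (hasDerivAt_expMoment _ _ _ _ _ _ _) fun q => (expMoment_one_zero_pos _ _ _ q).ne']
  have hD := (expMoment_one_zero_pos t₁ t₂ t₃ q).ne'
  simp only [expMoment, reducedSecondDeriv, sub_mul, exp_sub, add_mul, exp_add] at hD ⊢
  field_simp
  ring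

lemma min_le_mul_exp_add_mul_exp {u v a b : ℝ} (hu : 0 ≤ u) (hv : 0 ≤ v) (hab : a + b = 0) :
    min u v ≤ u * exp a + v * exp b := by
  calc min u v ≤ min u v * (exp a + exp b) :=
        le_mul_of_one_le_right (le_min hu hv) (by linarith [add_one_le_exp a, add_one_le_exp b])
    _ ≤ u * exp a + v * exp b := by
        rw [mul_add]
        gcongr
        exacts [min_le_left u v, min_le_right u v]

section
variable {x₁ x₂ x₃ t₁ t₂ t₃ : ℝ}

lemma differentiable_reducedSecondDeriv :
    Differentiable ℝ (reducedSecondDeriv x₁ x₂ x₃ t₁ t₂ t₃) := by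
  unfold reducedSecondDeriv
  fun_prop

lemma deriv_reducedSecondDeriv_le (hx₁₂ : x₁ < x₂) (hx₂₃ : x₂ < x₃) (ht₁₂ : t₁ < t₂)
    (ht₂₃ : t₂ < t₃) (q : ℝ) :
    deriv (reducedSecondDeriv x₁ x₂ x₃ t₁ t₂ t₃) q ≤
      -((x₂ - x₁) * (t₂ - t₁) ^ 3 * exp ((t₁ - t₃) * q) +
        (x₃ - x₂) * (t₃ - t₂) ^ 3 * exp ((t₃ - t₁) * q)) := by
  have hterm (b α β : ℝ) : HasDerivAt (fun q => b * (exp (α * q) - exp (β * q)))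
      (b * (α * exp (α * q) - β * exp (β * q))) q :=
    ((hasDerivAt_exp_const_mul α q).sub (hasDerivAt_exp_const_mul β q)).const_mul b
  unfold reducedSecondDeriv
  rw [(((hterm _ _ _).fun_add (hterm _ _ _)).fun_add (hterm _ _ _)).const_add _ |>.deriv]
  -- the two positive terms, in `e^{(t₂ - t₃) q}` and `e^{(t₂ - t₁) q}`, are each dominated by
  -- two of the four negative ones
  have hE₂₃ : exp ((t₂ - t₃) * q) ≤ exp ((t₁ - t₃) * q) + exp ((t₃ - t₂) * q) := by
    rcases le_total q 0 with hq | hq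
    · linarith [exp_le_exp.2 (show (t₂ - t₃) * q ≤ (t₁ - t₃) * q by nlinarith),
        exp_pos ((t₃ - t₂) * q)]
    · linarith [exp_le_exp.2 (show (t₂ - t₃) * q ≤ (t₃ - t₂) * q by nlinarith),
        exp_pos ((t₁ - t₃) * q)]
  have hE₂₁ : exp ((t₂ - t₁) * q) ≤ exp ((t₃ - t₁) * q) + exp ((t₁ - t₂) * q) := by
    rcases le_total q 0 with hq | hq
    · linarith [exp_le_exp.2 (show (t₂ - t₁) * q ≤ (t₁ - t₂) * q by nlinarith),
        exp_pos ((t₃ - t₁) * q)]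
    · linarith [exp_le_exp.2 (show (t₂ - t₁) * q ≤ (t₃ - t₁) * q by nlinarith),
        exp_pos ((t₁ - t₂) * q)]
  have hB₁₂ : (x₂ - x₁) * (t₂ - t₁) ^ 2 ≤ (x₃ - x₁) * (t₃ - t₁) ^ 2 := by
    gcongr; linarith
  have hB₂₃ : (x₃ - x₂) * (t₃ - t₂) ^ 2 ≤ (x₃ - x₁) * (t₃ - t₁) ^ 2 := by
    gcongr; linarith
  have h₂₃ : (x₂ - x₁) * (t₂ - t₁) ^ 2 * exp ((t₂ - t₃) * q) ≤
      (x₂ - x₁) * (t₂ - t₁) ^ 2 * exp ((t₁ - t₃) * q) +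
        (x₃ - x₁) * (t₃ - t₁) ^ 2 * exp ((t₃ - t₂) * q) := by
    calc _ ≤ (x₂ - x₁) * (t₂ - t₁) ^ 2 * (exp ((t₁ - t₃) * q) + exp ((t₃ - t₂) * q)) := by
          gcongr
      _ ≤ _ := by rw [mul_add]; gcongr
  have h₂₁ : (x₃ - x₂) * (t₃ - t₂) ^ 2 * exp ((t₂ - t₁) * q) ≤
      (x₃ - x₂) * (t₃ - t₂) ^ 2 * exp ((t₃ - t₁) * q) +
        (x₃ - x₁) * (t₃ - t₁) ^ 2 * exp ((t₁ - t₂) * q) := by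
    calc _ ≤ (x₃ - x₂) * (t₃ - t₂) ^ 2 * (exp ((t₃ - t₁) * q) + exp ((t₁ - t₂) * q)) := by
          gcongr
      _ ≤ _ := by rw [mul_add]; gcongr
  linarith [mul_le_mul_of_nonneg_left h₂₃ (sub_nonneg.2 ht₂₃.le),
    mul_le_mul_of_nonneg_left h₂₁ (sub_nonneg.2 ht₁₂.le)]

lemma exists_changesSignDownAt_iteratedDeriv_expMean (hx₁₂ : x₁ < x₂) (hx₂₃ : x₂ < x₃)
    (ht₁₂ : t₁ < t₂) (ht₂₃ : t₂ < t₃) :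
    ∃ a, ChangesSignDownAt (iteratedDeriv 2 (expMean x₁ x₂ x₃ t₁ t₂ t₃)) a := by
  have hu : 0 < (x₂ - x₁) * (t₂ - t₁) ^ 3 := mul_pos (by linarith) (pow_pos (by linarith) 3)
  have hv : 0 < (x₃ - x₂) * (t₃ - t₂) ^ 3 := mul_pos (by linarith) (pow_pos (by linarith) 3)
  obtain ⟨a, ha⟩ := exists_changesSignDownAt_of_deriv_le_neg differentiable_reducedSecondDeriv
    (lt_min hu hv) fun q => (deriv_reducedSecondDeriv_le hx₁₂ hx₂₃ ht₁₂ ht₂₃ q).trans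
      (neg_le_neg (min_le_mul_exp_add_mul_exp hu.le hv.le (by ring)))
  refine ⟨a, ?_⟩
  rw [funext (iteratedDeriv_two_expMean x₁ x₂ x₃ t₁ t₂ t₃)]
  exact ha.mul_pos_left fun q => div_pos (exp_pos _) (pow_pos (expMoment_one_zero_pos ..) 3)

end

lemma lehmer_eq_expMean {x₁ x₂ x₃ : ℝ} (hx₁ : 0 < x₁) (hx₂ : 0 < x₂) (hx₃ : 0 < x₃) :
    (fun q : ℝ => (x₁ ^ q + x₂ ^ q + x₃ ^ q) / (x₁ ^ (q - 1) + x₂ ^ (q - 1) + x₃ ^ (q - 1))) =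
      fun p => expMean x₁ x₂ x₃ (log x₁) (log x₂) (log x₃) (p - 1) := by
  have hmul {x : ℝ} (hx : 0 < x) (p : ℝ) : x * x ^ (p - 1) = x ^ p := by
    rw [rpow_sub_one hx.ne']
    field_simp
  funext p
  simp only [expMean, expMoment, ← rpow_def_of_pos hx₁, ← rpow_def_of_pos hx₂,
    ← rpow_def_of_pos hx₃, pow_zero, mul_one, one_mul, hmul hx₁, hmul hx₂, hmul hx₃]

lemma exists_changesSignDownAt_iteratedDeriv_lehmer_of_lt {x₁ x₂ x₃ : ℝ} (hx₁ : 0 < x₁)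
    (h₁₂ : x₁ < x₂) (h₂₃ : x₂ < x₃) :
    ∃ a, ChangesSignDownAt (iteratedDeriv 2 fun q : ℝ =>
      (x₁ ^ q + x₂ ^ q + x₃ ^ q) / (x₁ ^ (q - 1) + x₂ ^ (q - 1) + x₃ ^ (q - 1))) a := by
  have hx₂ := hx₁.trans h₁₂
  obtain ⟨a, ha⟩ := exists_changesSignDownAt_iteratedDeriv_expMean h₁₂ h₂₃
    (log_lt_log hx₁ h₁₂) (log_lt_log hx₂ h₂₃)
  refine ⟨a + 1, ?_⟩
  rw [lehmer_eq_expMean hx₁ hx₂ (hx₂.trans h₂₃), iteratedDeriv_comp_sub_const]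
  exact ha.comp_sub_const 1

lemma exists_changesSignDownAt_iteratedDeriv_lehmer {x₁ x₂ x₃ : ℝ}
    (hx₁ : 0 < x₁) (hx₂ : 0 < x₂) (hx₃ : 0 < x₃) (h₁₂ : x₁ ≠ x₂) (h₁₃ : x₁ ≠ x₃) (h₂₃ : x₂ ≠ x₃) :
    ∃ a, ChangesSignDownAt (iteratedDeriv 2 fun q : ℝ =>
      (x₁ ^ q + x₂ ^ q + x₃ ^ q) / (x₁ ^ (q - 1) + x₂ ^ (q - 1) + x₃ ^ (q - 1))) a := by
  wlog hlt₁₂ : x₁ < x₂ generalizing x₁ x₂ x₃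
  · convert this hx₂ hx₁ hx₃ h₁₂.symm h₂₃ h₁₃ (h₁₂.symm.lt_of_le (not_lt.1 hlt₁₂)) using 5
    ring
  wlog hlt₁₃ : x₁ < x₃ generalizing x₁ x₂ x₃
  · have hlt₃₁ := h₁₃.symm.lt_of_le (not_lt.1 hlt₁₃)
    convert this hx₃ hx₂ hx₁ h₂₃.symm h₁₃.symm h₁₂.symm (hlt₃₁.trans hlt₁₂) hlt₃₁ using 5
    ring
  rcases h₂₃.lt_or_gt with hlt₂₃ | hlt₃₂
  · exact exists_changesSignDownAt_iteratedDeriv_lehmer_of_lt hx₁ hlt₁₂ hlt₂₃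
  · convert exists_changesSignDownAt_iteratedDeriv_lehmer_of_lt hx₁ hlt₁₃ hlt₃₂ using 5
    ring

theorem lehmer_three_unique_inflection (x₁ x₂ x₃ : ℝ)
    (hx₁ : 0 < x₁) (hx₂ : 0 < x₂) (hx₃ : 0 < x₃)
    (h12 : x₁ ≠ x₂) (h13 : x₁ ≠ x₃) (h23 : x₂ ≠ x₃) :
    ∃ p' : ℝ,
      (∀ p : ℝ, iteratedDeriv 2
          (fun q : ℝ => (x₁ ^ q + x₂ ^ q + x₃ ^ q) /
            (x₁ ^ (q - 1) + x₂ ^ (q - 1) + x₃ ^ (q - 1))) p = 0 ↔ p = p') ∧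
      (∀ p : ℝ, p < p' → 0 < iteratedDeriv 2
          (fun q : ℝ => (x₁ ^ q + x₂ ^ q + x₃ ^ q) /
            (x₁ ^ (q - 1) + x₂ ^ (q - 1) + x₃ ^ (q - 1))) p) ∧
      (∀ p : ℝ, p' < p → iteratedDeriv 2
          (fun q : ℝ => (x₁ ^ q + x₂ ^ q + x₃ ^ q) /
            (x₁ ^ (q - 1) + x₂ ^ (q - 1) + x₃ ^ (q - 1))) p < 0) :=
  exists_changesSignDownAt_iteratedDeriv_lehmer hx₁ hx₂ hx₃ h12 h13 h23
end

section
/- For positive reals x₁, x₂, x₃ and any p ∈ ℝ, (x₂/x₃)^(p-1)(x₁−x₂)log(x₂/x₁) + (x₂/x₁)^(p-1)(x₂−x₃)log(x₃/x₂) ≤ (x₁−x₃)log(x₁/x₃). -/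
open Real

lemma aux_log_nonneg (a b : ℝ) (ha : 0 < a) (hb : 0 < b) :
    0 ≤ (a - b) * Real.log (a / b) := by
  rw [Real.log_div ha.ne' hb.ne']
  rcases le_total a b with h | h
  · have hl : Real.log a ≤ Real.log b := Real.log_le_log ha h
    nlinarith
  · have hl : Real.log b ≤ Real.log a := Real.log_le_log hb h
    nlinarith

theorem lehmer_three_aux_ineq (x₁ x₂ x₃ : ℝ)
    (hx₁ : 0 < x₁) (hx₂ : 0 < x₂) (hx₃ : 0 < x₃) (p : ℝ) :
    (x₂ / x₃) ^ (p - 1) * (x₁ - x₂) * Real.log (x₂ / x₁) +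
      (x₂ / x₁) ^ (p - 1) * (x₂ - x₃) * Real.log (x₃ / x₂) ≤
      (x₁ - x₃) * Real.log (x₁ / x₃) := by
  have h1 : (x₁ - x₂) * Real.log (x₂ / x₁) ≤ 0 := by
    have := aux_log_nonneg x₁ x₂ hx₁ hx₂
    rw [show x₂ / x₁ = (x₁ / x₂)⁻¹ by field_simp, Real.log_inv]
    nlinarith
  have h2 : (x₂ - x₃) * Real.log (x₃ / x₂) ≤ 0 := by
    have := aux_log_nonneg x₂ x₃ hx₂ hx₃
    rw [show x₃ / x₂ = (x₂ / x₃)⁻¹ by field_simp, Real.log_inv]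
    nlinarith
  have p1 : (0:ℝ) < (x₂ / x₃) ^ (p - 1) := Real.rpow_pos_of_pos (by positivity) _
  have p2 : (0:ℝ) < (x₂ / x₁) ^ (p - 1) := Real.rpow_pos_of_pos (by positivity) _
  have h3 : 0 ≤ (x₁ - x₃) * Real.log (x₁ / x₃) := aux_log_nonneg x₁ x₃ hx₁ hx₃
  nlinarith [mul_nonpos_of_nonneg_of_nonpos p1.le h1, mul_nonpos_of_nonneg_of_nonpos p2.le h2]
end

section
/- For positive reals x₁, x₂, x₃ and any p ∈ ℝ, (x₁x₂)^(p-1)(x₁−x₂)log(x₁/x₂) + (x₁x₃)^(p-1)(x₁−x₃)log(x₁/x₃) + (x₂x₃)^(p-1)(x₂−x₃)log(x₂/x₃) ≥ 0, with equality if and only if x₁ = x₂ = x₃. -/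
open Real

lemma aux_term_nonneg (x y : ℝ) (hx : 0 < x) (hy : 0 < y) (p : ℝ) :
    0 ≤ (x * y) ^ (p - 1) * (x - y) * Real.log (x / y) := by
  have hpow : (0:ℝ) < (x * y) ^ (p - 1) := Real.rpow_pos_of_pos (by positivity) _
  have hlog : Real.log (x / y) = Real.log x - Real.log y := Real.log_div hx.ne' hy.ne'
  rw [hlog, mul_assoc]
  apply mul_nonneg hpow.le
  rcases le_total x y with h | h
  · have := mul_nonneg (a := y - x) (b := Real.log y - Real.log x) (by linarith) (by simpa using Real.log_le_log hx h); nlinarith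
  · exact mul_nonneg (by linarith) (by simpa using Real.log_le_log hy h)

lemma aux_term_eq_zero (x y : ℝ) (hx : 0 < x) (hy : 0 < y) (p : ℝ) :
    (x * y) ^ (p - 1) * (x - y) * Real.log (x / y) = 0 ↔ x = y := by
  have hpow : (0:ℝ) < (x * y) ^ (p - 1) := Real.rpow_pos_of_pos (by positivity) _
  constructor
  · intro h
    rcases mul_eq_zero.1 h with h' | h'
    · rcases mul_eq_zero.1 h' with h'' | h''
      · exact absurd h'' hpow.ne'
      · linarith [sub_eq_zero.1 h'']
    · have := Real.log_eq_zero.1 h'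
      rcases this with h'' | h'' | h''
      · exact absurd h'' (by positivity)
      · field_simp at h''; linarith
      · have : x / y > 0 := by positivity
        linarith
  · intro h; subst h; simp

theorem lehmer_three_pos_combination (x₁ x₂ x₃ : ℝ)
    (hx₁ : 0 < x₁) (hx₂ : 0 < x₂) (hx₃ : 0 < x₃) (p : ℝ) :
    0 ≤ (x₁ * x₂) ^ (p - 1) * (x₁ - x₂) * Real.log (x₁ / x₂) +
        (x₁ * x₃) ^ (p - 1) * (x₁ - x₃) * Real.log (x₁ / x₃) +
        (x₂ * x₃) ^ (p - 1) * (x₂ - x₃) * Real.log (x₂ / x₃) ∧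
    ((x₁ * x₂) ^ (p - 1) * (x₁ - x₂) * Real.log (x₁ / x₂) +
        (x₁ * x₃) ^ (p - 1) * (x₁ - x₃) * Real.log (x₁ / x₃) +
        (x₂ * x₃) ^ (p - 1) * (x₂ - x₃) * Real.log (x₂ / x₃) = 0 ↔
      x₁ = x₂ ∧ x₂ = x₃) := by
  have h12 := aux_term_nonneg x₁ x₂ hx₁ hx₂ p
  have h13 := aux_term_nonneg x₁ x₃ hx₁ hx₃ p
  have h23 := aux_term_nonneg x₂ x₃ hx₂ hx₃ p
  refine ⟨by linarith, ?_, ?_⟩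
  · intro h
    have e12 : (x₁ * x₂) ^ (p - 1) * (x₁ - x₂) * Real.log (x₁ / x₂) = 0 := by linarith
    have e23 : (x₂ * x₃) ^ (p - 1) * (x₂ - x₃) * Real.log (x₂ / x₃) = 0 := by linarith
    exact ⟨(aux_term_eq_zero x₁ x₂ hx₁ hx₂ p).1 e12, (aux_term_eq_zero x₂ x₃ hx₂ hx₃ p).1 e23⟩
  · rintro ⟨h1, h2⟩; subst h1; subst h2; simp
end

section
/- For positive reals x₁,…,xₙ, not all equal, the second derivative of the Lehmer mean L(p) = (Σᵢ xᵢ^p)/(Σᵢ xᵢ^(p-1)) has at most n(n+4)(n−1)/6 − 1 real zeros; in particular L has at most n(n+4)(n−1)/6 − 1 inflection points. -/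
/-!
With `A(p) = ∑ xᵢ ^ p = ∑ exp (p log xᵢ)` and `B(p) = ∑ xᵢ ^ (p - 1) = ∑ xᵢ⁻¹ exp (p log xᵢ)`,
the quotient rule gives `L'' = N / B³` with `N = A''B² - 2A'B'B - AB''B + 2AB'²`. Expanded, `N` is
an exponential sum over triples `(i, j, k)` with exponents `log xᵢ + log xⱼ + log xₖ`; the
coefficient vanishes on the diagonal `i = j = k` and the exponent depends only on the multiset
`{i, j, k}`, so `N` has at most `C(n+2, 3) - n = n(n+4)(n-1)/6` distinct exponents. An exponential
sum with `k` distinct exponents that does not vanish identically has at most `k - 1` real zeros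
(divide by one of its exponentials and apply Rolle's theorem, inductively). Finally `N ≢ 0`:
otherwise `L` would be affine, hence constant since it is positive, whereas `L(1) < L(2)` by the
strict Cauchy–Schwarz inequality.
-/

open Real Finset

theorem encard_zeros_le_encard_zeros_deriv_add_one {f : ℝ → ℝ} (hf : Continuous f) :
    {x | f x = 0}.encard ≤ {x | deriv f x = 0}.encard + 1 := by
  rcases Set.finite_or_infinite {x | deriv f x = 0} with hT | hT
  swap
  · simp [hT.encard_eq]
  by_contra! h
  obtain ⟨s, hsZ, hs⟩ := Set.exists_subset_encard_eq (Order.add_one_le_of_lt h)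
  have hsfin : s.Finite :=
    Set.finite_of_encard_eq_coe (by rw [hs, hT.encard_eq_coe_toFinset_card]; rfl)
  have hinter : hsfin.toFinset.card ≤ hT.toFinset.card + 1 := by
    refine card_le_of_interleaved fun a ha b hb hab _ => ?_
    simp only [Set.Finite.mem_toFinset] at ha hb ⊢
    obtain ⟨c, hc, hc0⟩ :=
      exists_deriv_eq_zero hab hf.continuousOn ((hsZ ha).trans (hsZ hb).symm)
    exact ⟨c, hc0, hc⟩
  rw [hsfin.encard_eq_coe_toFinset_card, hT.encard_eq_coe_toFinset_card] at hs
  norm_cast at hs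
  omega

theorem hasDerivAt_sum_mul_exp {ι : Type*} (s : Finset ι) (c a : ι → ℝ) (p : ℝ) :
    HasDerivAt (fun q => ∑ i ∈ s, c i * exp (a i * q)) (∑ i ∈ s, c i * a i * exp (a i * p)) p :=
  HasDerivAt.fun_sum fun i _ =>
    ((((hasDerivAt_id' p).const_mul (a i)).exp).const_mul (c i)).congr_deriv (by ring)

theorem encard_zeros_sum_mul_exp_add_one_le {ι : Type*} (s : Finset ι) (c a : ι → ℝ)
    (h : ∃ p, ∑ i ∈ s, c i * exp (a i * p) ≠ 0) :
    {p | ∑ i ∈ s, c i * exp (a i * p) = 0}.encard + 1 ≤ (s.image a).card := by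
  classical
  induction hk : (s.image a).card generalizing s c with
  | zero => simp_all
  | succ k ih =>
    obtain ⟨i₀, hi₀⟩ : s.Nonempty := by rw [← image_nonempty (f := a), ← card_pos, hk]; omega
    set e₀ := a i₀
    set s' := s.filter (a · ≠ e₀)
    set c' := fun i => c i * (a i - e₀)
    -- multiplying by `exp (-e₀ p)` keeps the zeros and kills the `e₀`-terms of the derivative
    set G := fun p => exp (-e₀ * p) * ∑ i ∈ s, c i * exp (a i * p)
    have hG : ∀ p, HasDerivAt G (exp (-e₀ * p) * ∑ i ∈ s', c' i * exp (a i * p)) p := by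
      intro p
      refine (((hasDerivAt_id' p).const_mul (-e₀)).exp.mul
        (hasDerivAt_sum_mul_exp s c a p)).congr_deriv ?_
      rw [sum_filter_of_ne (fun i _ h => by contrapose! h; simp [c', h])]
      simp only [c', mul_sum, ← sum_add_distrib]
      exact sum_congr rfl fun i _ => by ring
    have hzG : {p | ∑ i ∈ s, c i * exp (a i * p) = 0} = {p | G p = 0} := by
      ext p; simp [G, exp_ne_zero]
    have hzG' : {p | deriv G p = 0} = {p | ∑ i ∈ s', c' i * exp (a i * p) = 0} := by
      ext p; simp [(hG p).deriv, exp_ne_zero]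
    have hk' : (s'.image a).card = k := by
      have : s'.image a = (s.image a).erase e₀ := by
        ext; simp only [s', mem_image, mem_filter, mem_erase]; grind
      rw [this, card_erase_of_mem (mem_image_of_mem a hi₀), hk]; rfl
    by_cases hH : ∃ p, ∑ i ∈ s', c' i * exp (a i * p) ≠ 0
    · have hRolle := encard_zeros_le_encard_zeros_deriv_add_one
        (continuous_iff_continuousAt.2 fun p => (hG p).continuousAt)
      calc _ = {p | G p = 0}.encard + 1 := by rw [hzG]
        _ ≤ {p | deriv G p = 0}.encard + 1 + 1 := by gcongr
        _ ≤ k + 1 := by gcongr; rw [hzG']; exact ih s' c' hH hk'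
        _ = _ := by push_cast; rfl
    · push Not at hH
      obtain ⟨p₀, hp₀⟩ := h
      have hGconst : ∀ p, G p = G p₀ := fun p =>
        is_const_of_deriv_eq_zero (fun p => (hG p).differentiableAt)
          (fun p => by simp [(hG p).deriv, hH]) p p₀
      have : {p | ∑ i ∈ s, c i * exp (a i * p) = 0} = ∅ := by
        rw [hzG, Set.eq_empty_iff_forall_notMem]
        intro p hp
        rw [Set.mem_ofPred_eq, hGconst p] at hp
        simp [G, exp_ne_zero, hp₀] at hp
      simp [this]

theorem iteratedDeriv_two_div_s18 {𝕜 : Type*} [NontriviallyNormedField 𝕜]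
    {f f₁ f₂ g g₁ g₂ : 𝕜 → 𝕜}
    (hf : ∀ p, HasDerivAt f (f₁ p) p) (hf₁ : ∀ p, HasDerivAt f₁ (f₂ p) p)
    (hg : ∀ p, HasDerivAt g (g₁ p) p) (hg₁ : ∀ p, HasDerivAt g₁ (g₂ p) p)
    (hg0 : ∀ p, g p ≠ 0) (p : 𝕜) :
    iteratedDeriv 2 (fun q => f q / g q) p =
      (f₂ p * g p ^ 2 - 2 * f₁ p * g₁ p * g p - f p * g₂ p * g p + 2 * f p * g₁ p ^ 2) /
        g p ^ 3 := by
  have hderiv : deriv (fun q => f q / g q) = fun q => (f₁ q * g q - f q * g₁ q) / g q ^ 2 :=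
    funext fun q => ((hf q).div (hg q) (hg0 q)).deriv
  rw [iteratedDeriv_succ, iteratedDeriv_one, hderiv]
  refine ((((hf₁ p).fun_mul (hg p)).fun_sub ((hf p).fun_mul (hg₁ p))).fun_div ((hg p).fun_pow 2)
    (pow_ne_zero 2 (hg0 p))).deriv.trans ?_
  have := hg0 p
  field_simp
  ring

theorem eq_of_iteratedDeriv_two_eq_zero_of_bddBelow {f : ℝ → ℝ} (hf : ContDiff ℝ 2 f)
    (h2 : ∀ p, iteratedDeriv 2 f p = 0) (hbdd : BddBelow (Set.range f)) (p q : ℝ) :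
    f p = f q := by
  have hf' : Differentiable ℝ (deriv f) := by
    simpa using hf.differentiable_iteratedDeriv 1 (by norm_num)
  set c := deriv f 0
  have hc : ∀ p, deriv f p = c := fun p =>
    is_const_of_deriv_eq_zero hf' (fun p => by simpa [iteratedDeriv_succ] using h2 p) p 0
  have haff : ∀ p, f p = f 0 + c * p := by
    intro p
    have hd : ∀ p, HasDerivAt (fun p => f p - c * p) 0 p := fun p =>
      (((hf.differentiable (by norm_num)) p).hasDerivAt.sub
        ((hasDerivAt_id p).const_mul c)).congr_deriv (by simp [hc])
    have := is_const_of_deriv_eq_zero (fun p => (hd p).differentiableAt)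
      (fun p => (hd p).deriv) p 0
    linarith
  obtain ⟨M, hM⟩ := hbdd
  have hc0 : c = 0 := by
    by_contra hc0
    have := hM ⟨(M - 1 - f 0) / c, rfl⟩
    rw [haff, mul_div_cancel₀ _ hc0] at this
    linarith
  rw [haff p, haff q, hc0, zero_mul, zero_mul]

theorem sq_sum_lt_card_mul_sum_sq {ι : Type*} [Fintype ι] {x : ι → ℝ}
    (hx : ¬ ∀ i j, x i = x j) :
    (∑ i, x i) ^ 2 < Fintype.card ι * ∑ i, x i ^ 2 := by
  have key : ∑ i, ∑ j, (x i - x j) ^ 2 =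
      2 * (Fintype.card ι * ∑ i, x i ^ 2 - (∑ i, x i) ^ 2) := by
    simp only [sub_sq, sum_add_distrib, sum_sub_distrib, sum_const, card_univ, ← mul_sum,
      ← sum_mul]
    simp only [nsmul_eq_mul, ← mul_sum]; ring
  push Not at hx
  obtain ⟨i, j, hij⟩ := hx
  have : 0 < ∑ i, ∑ j, (x i - x j) ^ 2 :=
    sum_pos' (fun i _ => sum_nonneg fun j _ => sq_nonneg _)
      ⟨i, mem_univ _, sum_pos' (fun j _ => sq_nonneg _) ⟨j, mem_univ _, by positivity⟩⟩
  linarith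

theorem card_image_triple_sum_le {α M : Type*} [Fintype α] [DecidableEq α] [AddCommMonoid M]
    [DecidableEq M] (L : α → M) :
    ((univ.filter fun m : α × α × α => ¬(m.1 = m.2.1 ∧ m.2.1 = m.2.2)).image
      fun m => L m.1 + L m.2.1 + L m.2.2).card ≤
        (Fintype.card α + 2).choose 3 - Fintype.card α := by
  set T := (univ : Finset (Sym α 3)) \ univ.image (Sym.replicate 3)
  calc _ ≤ (T.image fun t : Sym α 3 => ((t : Multiset α).map L).sum).card := by
        refine card_le_card fun e he => ?_
        obtain ⟨⟨i, j, k⟩, hm, rfl⟩ := mem_image.1 he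
        refine mem_image.2 ⟨(⟨{i, j, k}, rfl⟩ : Sym α 3), ?_, by simp [add_assoc]⟩
        refine mem_sdiff.2 ⟨mem_univ _, fun hr => ?_⟩
        obtain ⟨r, -, hr⟩ := mem_image.1 hr
        have h : ∀ a ∈ ({i, j, k} : Multiset α), a = r := fun a ha =>
          Multiset.eq_of_mem_replicate (by rwa [← Sym.coe_replicate, hr])
        simp only [mem_filter, mem_univ, true_and] at hm
        exact hm ⟨(h i (by simp)).trans (h j (by simp)).symm,
          (h j (by simp)).trans (h k (by simp)).symm⟩
    _ ≤ T.card := card_image_le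
    _ = _ := by
      rw [card_sdiff_of_subset (subset_univ _), card_univ, Sym.card_sym_eq_choose,
        card_image_of_injective _ (Sym.replicate_right_injective (by norm_num)), card_univ]
      rfl

theorem add_two_choose_three_sub_self (n : ℕ) :
    (n + 2).choose 3 - n = n * (n + 4) * (n - 1) / 6 := by
  have h : Nat.factorial 3 * (n + 2).choose 3 = (n + 2) * (n + 1) * n := by
    rw [← Nat.descFactorial_eq_factorial_mul_choose]
    simp only [Nat.descFactorial, add_tsub_cancel_right, Nat.add_one_sub_one, tsub_zero, mul_one]
    ring
  rcases n with _ | m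
  · rfl
  · rw [Nat.add_sub_cancel]
    refine (Nat.div_eq_of_eq_mul_left (by norm_num) ?_).symm
    rw [Nat.sub_mul]
    apply Nat.eq_sub_of_add_eq
    simp only [Nat.factorial] at h
    nlinarith [h]

section Lehmer

variable {ι : Type*} [Fintype ι] {x : ι → ℝ}

noncomputable def lehmerMean (x : ι → ℝ) (p : ℝ) : ℝ :=
  (∑ i, x i ^ p) / ∑ i, x i ^ (p - 1)

theorem sum_rpow_pos [Nonempty ι] (hx : ∀ i, 0 < x i) (p : ℝ) : 0 < ∑ i, x i ^ p :=
  sum_pos (fun i _ => rpow_pos_of_pos (hx i) p) univ_nonempty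

/-- The coefficient of `exp ((log xᵢ + log xⱼ + log xₖ) p)` in `A''B² - 2A'B'B - AB''B + 2AB'²`. -/
noncomputable def lehmerCoeff (x : ι → ℝ) (m : ι × ι × ι) : ℝ :=
  (log (x m.1) ^ 2 + 2 * log (x m.2.1) * log (x m.2.2) - log (x m.2.1) ^ 2
    - 2 * log (x m.1) * log (x m.2.1)) * ((x m.2.1)⁻¹ * (x m.2.2)⁻¹)

theorem lehmerMean_eq_div_sum_exp (hx : ∀ i, 0 < x i) :
    lehmerMean x = fun q =>
      (∑ i, 1 * exp (log (x i) * q)) / ∑ i, (x i)⁻¹ * exp (log (x i) * q) := by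
  funext q
  simp only [lehmerMean, one_mul, rpow_def_of_pos (hx _), mul_sub, mul_one, exp_sub,
    exp_log (hx _)]
  congr 1
  exact sum_congr rfl fun i _ => by ring

theorem iteratedDeriv_two_lehmerMean [Nonempty ι] (hx : ∀ i, 0 < x i) (p : ℝ) :
    iteratedDeriv 2 (lehmerMean x) p =
      (∑ m : ι × ι × ι, lehmerCoeff x m *
        exp ((log (x m.1) + log (x m.2.1) + log (x m.2.2)) * p)) / (∑ i, x i ^ (p - 1)) ^ 3 := by
  have hB : ∀ q, 0 < ∑ i, (x i)⁻¹ * exp (log (x i) * q) := fun q =>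
    sum_pos (fun i _ => by have := hx i; positivity) univ_nonempty
  rw [lehmerMean_eq_div_sum_exp hx, iteratedDeriv_two_div_s18
    (hasDerivAt_sum_mul_exp _ _ _) (hasDerivAt_sum_mul_exp _ _ _)
    (hasDerivAt_sum_mul_exp _ _ _) (hasDerivAt_sum_mul_exp _ _ _) (fun q => (hB q).ne')]
  congr 1
  · -- bracketed as `S₁ * (S₂ * S₃)`, each product expands to a triple sum indexed as `lehmerCoeff`
    rw [show ∀ a b c d e f : ℝ, a * c ^ 2 - 2 * b * d * c - e * f * c + 2 * e * d ^ 2 =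
      a * (c * c) - 2 * (b * (d * c)) - e * (f * c) + 2 * (e * (d * d)) by intros; ring]
    simp only [sum_mul_sum]
    simp only [mul_sum, ← sum_sub_distrib, ← sum_add_distrib, Fintype.sum_prod_type]
    refine sum_congr rfl fun i _ => sum_congr rfl fun j _ => sum_congr rfl fun k _ => ?_
    simp only [lehmerCoeff, add_mul, exp_add]
    ring
  · congr 1
    exact sum_congr rfl fun i _ => by
      rw [rpow_def_of_pos (hx i), mul_sub, mul_one, exp_sub, exp_log (hx i)]; ring

theorem iteratedDeriv_two_lehmerMean_eq_zero_iff [DecidableEq ι] [Nonempty ι]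
    (hx : ∀ i, 0 < x i) (p : ℝ) :
    iteratedDeriv 2 (lehmerMean x) p = 0 ↔
      ∑ m ∈ univ.filter fun m : ι × ι × ι => ¬(m.1 = m.2.1 ∧ m.2.1 = m.2.2),
        lehmerCoeff x m * exp ((log (x m.1) + log (x m.2.1) + log (x m.2.2)) * p) = 0 := by
  rw [iteratedDeriv_two_lehmerMean hx, div_eq_zero_iff,
    or_iff_left (pow_ne_zero 3 (sum_rpow_pos hx (p - 1)).ne')]
  refine Eq.congr_left (sum_filter_of_ne fun ⟨i, j, k⟩ _ h hdiag => h ?_).symm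
  dsimp only at hdiag
  obtain ⟨rfl, rfl⟩ := hdiag
  simp only [lehmerCoeff]
  ring

theorem contDiff_lehmerMean [Nonempty ι] (hx : ∀ i, 0 < x i) : ContDiff ℝ 2 (lehmerMean x) :=
  ContDiff.div (by fun_prop (disch := exact fun _ => (hx _).ne'))
    (by fun_prop (disch := exact fun _ => (hx _).ne')) fun p => (sum_rpow_pos hx (p - 1)).ne'

theorem exists_iteratedDeriv_two_lehmerMean_ne_zero (hx : ∀ i, 0 < x i)
    (hne : ¬ ∀ i j, x i = x j) : ∃ p, iteratedDeriv 2 (lehmerMean x) p ≠ 0 := by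
  obtain ⟨i₀, -⟩ := not_forall.1 hne
  have : Nonempty ι := ⟨i₀⟩
  by_contra! h
  have h12 := eq_of_iteratedDeriv_two_eq_zero_of_bddBelow (contDiff_lehmerMean hx) h
    ⟨0, by rintro _ ⟨p, rfl⟩; exact (div_pos (sum_rpow_pos hx p) (sum_rpow_pos hx _)).le⟩ 1 2
  have hsum : 0 < ∑ i, x i := sum_pos (fun i _ => hx i) univ_nonempty
  have hcard : (0 : ℝ) < Fintype.card ι := by exact_mod_cast Fintype.card_pos
  simp only [lehmerMean, show (2 : ℝ) - 1 = 1 by norm_num, sub_self, rpow_zero, rpow_one,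
    rpow_ofNat, sum_const, card_univ, nsmul_eq_mul, mul_one] at h12
  rw [div_eq_div_iff hcard.ne' hsum.ne'] at h12
  nlinarith [sq_sum_lt_card_mul_sum_sq hne]

end Lehmer

theorem lehmer_inflection_bound (n : ℕ) (x : Fin n → ℝ) (hx : ∀ i, 0 < x i)
    (hne : ¬ ∀ i j, x i = x j) :
    {p : ℝ | iteratedDeriv 2
        (fun q : ℝ => (∑ i, x i ^ q) / (∑ i, x i ^ (q - 1))) p = 0}.Finite ∧
      {p : ℝ | iteratedDeriv 2
        (fun q : ℝ => (∑ i, x i ^ q) / (∑ i, x i ^ (q - 1))) p = 0}.ncard ≤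
        n * (n + 4) * (n - 1) / 6 - 1 := by
  obtain ⟨i₀, -⟩ := not_forall.1 hne
  have : Nonempty (Fin n) := ⟨i₀⟩
  set s := univ.filter fun m : Fin n × Fin n × Fin n => ¬(m.1 = m.2.1 ∧ m.2.1 = m.2.2)
  set a := fun m : Fin n × Fin n × Fin n => log (x m.1) + log (x m.2.1) + log (x m.2.2)
  have hzeros : {p | iteratedDeriv 2 (lehmerMean x) p = 0} =
      {p | ∑ m ∈ s, lehmerCoeff x m * exp (a m * p) = 0} :=
    Set.ext fun p => iteratedDeriv_two_lehmerMean_eq_zero_iff hx p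
  have hnz : ∃ p, ∑ m ∈ s, lehmerCoeff x m * exp (a m * p) ≠ 0 := by
    obtain ⟨p, hp⟩ := exists_iteratedDeriv_two_lehmerMean_ne_zero hx hne
    exact ⟨p, mt (Set.ext_iff.1 hzeros p).2 hp⟩
  have hexponents : (s.image a).card ≤ n * (n + 4) * (n - 1) / 6 := by
    rw [← add_two_choose_three_sub_self]
    simpa only [Fintype.card_fin] using card_image_triple_sum_le fun i => log (x i)
  have hcount : {p | iteratedDeriv 2 (lehmerMean x) p = 0}.encard + 1 ≤
      (n * (n + 4) * (n - 1) / 6 : ℕ) := by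
    rw [hzeros]
    exact (encard_zeros_sum_mul_exp_add_one_le s _ a hnz).trans (by exact_mod_cast hexponents)
  show {p | iteratedDeriv 2 (lehmerMean x) p = 0}.Finite ∧
    {p | iteratedDeriv 2 (lehmerMean x) p = 0}.ncard ≤ _
  have hfin := Set.finite_of_encard_le_coe (le_self_add.trans hcount)
  refine ⟨hfin, ?_⟩
  rw [← hfin.cast_ncard_eq] at hcount
  norm_cast at hcount
  omega
end
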